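/- Let G be a group with free presentation F/R (F a free group, π : F → G surjective with kernel R), let B be a normal subgroup of G, and let S = π⁻¹(B). Then for every integer c ≥ 1 the quotient [S,_cF] / ([R,_cF]·[S,_{c+1}F]·∏_{i=2}^{c+1} γ_{c+1}(S,F)_i) is abelian, and there exists a surjective homomorphism from ⊗^{c+1}(B, G/B) onto this quotient. -/

import Mathlib

open Subgroup

/-- `itComm X Y c` is the `c`-fold iterated commutator subgroup
`[X,_c Y] = ⁅…⁅⁅X,Y⁆,Y⁆,…,Y⁆` (with `c` copies of `Y`); `itComm X Y 0 = X`. -/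
def itComm {P : Type*} [Group P] (X Y : Subgroup P) : ℕ → Subgroup P
  | 0 => X
  | c + 1 => ⁅itComm X Y c, Y⁆

instance itComm_normal {P : Type*} [Group P] (X Y : Subgroup P) [hX : X.Normal] [hY : Y.Normal]
    (c : ℕ) : (itComm X Y c).Normal := by
  induction c with
  | zero => exact hX
  | succ c ih => exact Subgroup.commutator_normal _ _

/-- The abelianization of a group, written additively. -/
abbrev AbOf (A : Type) [Group A] : Type := Additive (Abelianization A)

/-- Iterated tensor product `M ⊗ B ⊗ ⋯ ⊗ B` (with `c` factors `B`) of `ℤ`-modules. -/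
noncomputable def iterTensor (M B : ModuleCat ℤ) : ℕ → ModuleCat ℤ
  | 0 => M
  | c + 1 => ModuleCat.of ℤ (TensorProduct ℤ (iterTensor M B c) B)

/-- `⊗^{c+1}(A, B) = A^{ab} ⊗_ℤ B^{ab} ⊗_ℤ ⋯ ⊗_ℤ B^{ab}` with `c` factors `B^{ab}`. -/
noncomputable def tensorPair (A B : Type) [Group A] [Group B] (c : ℕ) : ModuleCat ℤ :=
  iterTensor (ModuleCat.of ℤ (AbOf A)) (ModuleCat.of ℤ (AbOf B)) c

/-- `M^{(c)}(G,N) = (R ∩ [S,_c F]) / [R,_c F]`, where `R = ker π` and `S = π⁻¹(N)`,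
relative to the free presentation `π : F ↠ G`. -/
def McPair {F G : Type} [Group F] [Group G] (π : F →* G) (N : Subgroup G) (c : ℕ) : Type :=
  (π.ker ⊓ itComm (N.comap π) ⊤ c : Subgroup F) ⧸
    (itComm π.ker ⊤ c).subgroupOf (π.ker ⊓ itComm (N.comap π) ⊤ c)

noncomputable instance {F G : Type} [Group F] [Group G] (π : F →* G) (N : Subgroup G) (c : ℕ) :
    Group (McPair π N c) :=
  inferInstanceAs (Group ((π.ker ⊓ itComm (N.comap π) ⊤ c : Subgroup F) ⧸
    (itComm π.ker ⊤ c).subgroupOf (π.ker ⊓ itComm (N.comap π) ⊤ c)))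

/-- `M^{(c)}(G/K, N/K) = (T ∩ [S,_c F]) / [T,_c F]`, where `T = π⁻¹(K)` and `S = π⁻¹(N)`,
relative to the free presentation `π : F ↠ G`. -/
def McPairQuot {F G : Type} [Group F] [Group G] (π : F →* G) (N K : Subgroup G) (c : ℕ) :
    Type :=
  (K.comap π ⊓ itComm (N.comap π) ⊤ c : Subgroup F) ⧸
    (itComm (K.comap π) ⊤ c).subgroupOf (K.comap π ⊓ itComm (N.comap π) ⊤ c)

noncomputable instance {F G : Type} [Group F] [Group G] (π : F →* G) (N K : Subgroup G)
    [K.Normal] (c : ℕ) : Group (McPairQuot π N K c) :=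
  inferInstanceAs (Group ((K.comap π ⊓ itComm (N.comap π) ⊤ c : Subgroup F) ⧸
    (itComm (K.comap π) ⊤ c).subgroupOf (K.comap π ⊓ itComm (N.comap π) ⊤ c)))

/-- `gammaMixed T c i` is the left-normed multiple commutator subgroup
`γ_{c+1}(T,F)_i = [D_1,D_2,…,D_{c+1}]` with `D_1 = D_i = T` and `D_j = F` (i.e. `⊤`)
for `j ≠ 1, i`. -/
def gammaMixed {P : Type*} [Group P] (T : Subgroup P) (c i : ℕ) : Subgroup P :=
  (List.range c).foldl (fun A j => ⁅A, if j + 2 = i then T else ⊤⁆) T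

private theorem foldl_comm_normal {P : Type*} [Group P] (T : Subgroup P) [hT : T.Normal]
    (i : ℕ) : ∀ (L : List ℕ) (A : Subgroup P), A.Normal →
      (L.foldl (fun A j => ⁅A, if j + 2 = i then T else ⊤⁆) A).Normal := by
  intro L
  induction L with
  | nil => intro A hA; exact hA
  | cons a L ih =>
      intro A hA
      apply ih
      haveI := hA
      by_cases h : a + 2 = i
      · simpa [h] using (inferInstance : (⁅A, T⁆).Normal)
      · simpa [h] using (inferInstance : (⁅A, (⊤ : Subgroup P)⁆).Normal)

instance gammaMixed_normal {P : Type*} [Group P] (T : Subgroup P) [hT : T.Normal] (c i : ℕ) :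
    (gammaMixed T c i).Normal :=
  foldl_comm_normal T i (List.range c) T hT

instance finsetSup_gammaMixed_normal {P : Type*} [Group P] (T : Subgroup P) [T.Normal]
    (c : ℕ) (s : Finset ℕ) : (s.sup (gammaMixed T c)).Normal := by
  induction s using Finset.cons_induction with
  | empty => simpa [Finset.sup_empty] using (inferInstance : (⊥ : Subgroup P).Normal)
  | cons a s ha ih =>
      rw [Finset.sup_cons]
      haveI := ih
      exact Subgroup.sup_normal _ _


/-!
Write `N = [R,_cF]·[S,_{c+1}F]·∏ γ_{c+1}(S,F)_i`.  The quotient `[S,_cF] / N` is abelian since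
`⁅[S,_cF], [S,_cF]⁆ ≤ [S,_{c+1}F]`.  Modulo `N`, the left-normed commutator `[s, f₁, …, f_c]`
(`s ∈ S`, `fᵢ ∈ F`) is multiplicative in `s` and in each `fᵢ`, the error terms lying in
`[S,_{c+1}F]`; it is unchanged when `s` is multiplied by an element of `R` (error in `[R,_cF]`)
or `fᵢ` by an element of `S` (error in `γ_{c+1}(S,F)_{i+1}`).  Hence
`b ⊗ g₁ ⊗ ⋯ ⊗ g_c ↦ [s, f₁, …, f_c]`, for lifts `s` of `b` and `fᵢ` of `gᵢ`, is a homomorphism,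
and it is onto because multiplicativity expands every element of `[S,_cF]` modulo `N` into such
commutators.
-/

open scoped commutatorElement

section IteratedCommutator

variable {P : Type*} [Group P]

theorem itComm_succ (X Y : Subgroup P) (n : ℕ) : itComm X Y (n + 1) = ⁅itComm X Y n, Y⁆ := rfl

theorem itComm_commutator (X Y : Subgroup P) : ∀ n, itComm ⁅X, Y⁆ Y n = itComm X Y (n + 1)
  | 0 => rfl
  | n + 1 => congrArg (⁅·, Y⁆) (itComm_commutator X Y n)

theorem foldl_commutator_eq_itComm (T : Subgroup P) (i : ℕ) :
    ∀ (L : List ℕ), (∀ j ∈ L, j + 2 ≠ i) → ∀ A : Subgroup P,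
      L.foldl (fun A j => ⁅A, if j + 2 = i then T else ⊤⁆) A = itComm A ⊤ L.length
  | [], _, _ => rfl
  | j :: L, hL, A => by
      rw [List.foldl_cons, if_neg (hL j List.mem_cons_self),
        foldl_commutator_eq_itComm T i L (fun x hx => hL x (List.mem_cons_of_mem j hx)),
        itComm_commutator, List.length_cons]

theorem gammaMixed_eq_itComm (T : Subgroup P) (a b : ℕ) :
    gammaMixed T (a + 1 + b) (a + 2) = itComm ⁅itComm T ⊤ a, T⁆ ⊤ b := by
  rw [gammaMixed, List.range_add, List.foldl_append, List.range_succ, List.foldl_append,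
    foldl_commutator_eq_itComm T _ (List.range a) (fun j hj => by
      have := List.mem_range.mp hj; omega),
    List.length_range, List.foldl_cons, List.foldl_nil, if_pos rfl,
    foldl_commutator_eq_itComm T _ _ (fun j hj => by
      obtain ⟨j', -, rfl⟩ := List.mem_map.mp hj; omega),
    List.length_map, List.length_range]

end IteratedCommutator

section LeftNormedCommutator

variable {P : Type*} [Group P]

def leftNormedComm : P → List P → P
  | x, [] => x
  | x, f :: l => leftNormedComm ⁅x, f⁆ l

@[simp]
theorem leftNormedComm_cons (x f : P) (l : List P) :
    leftNormedComm x (f :: l) = leftNormedComm ⁅x, f⁆ l := rfl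

theorem leftNormedComm_append (x : P) (l₁ l₂ : List P) :
    leftNormedComm x (l₁ ++ l₂) = leftNormedComm (leftNormedComm x l₁) l₂ := by
  induction l₁ generalizing x with
  | nil => rfl
  | cons f l₁ ih => exact ih ⁅x, f⁆

@[simp]
theorem leftNormedComm_one (l : List P) : leftNormedComm (1 : P) l = 1 := by
  induction l with
  | nil => rfl
  | cons f l ih => rwa [leftNormedComm_cons, commutatorElement_one_left]

theorem leftNormedComm_mem_itComm {K : Subgroup P} {k : ℕ} {x : P} (hx : x ∈ itComm K ⊤ k)
    (l : List P) : leftNormedComm x l ∈ itComm K ⊤ (k + l.length) := by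
  induction l generalizing k x with
  | nil => exact hx
  | cons f l ih =>
      rw [leftNormedComm_cons, List.length_cons, Nat.add_comm l.length 1, ← Nat.add_assoc]
      exact ih (k := k + 1) (commutator_mem_commutator hx (mem_top f))

end LeftNormedCommutator

section ModuloNormal

variable {P : Type*} [Group P] {S N : Subgroup P} [N.Normal] {c : ℕ}

theorem commute_of_mem_itComm (h1 : itComm S ⊤ (c + 1) ≤ N) {u : P} (hu : u ∈ itComm S ⊤ c)
    (z : P) : Commute (u : P ⧸ N) z := by
  rw [← commutatorElement_eq_one_iff_commute]
  have := (QuotientGroup.eq_one_iff (N := N) _).2 (h1 (commutator_mem_commutator hu (mem_top z)))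
  simpa only [commutatorElement_def, QuotientGroup.mk_mul, QuotientGroup.mk_inv] using this

theorem leftNormedComm_eq_one_of_mem (h1 : itComm S ⊤ (c + 1) ≤ N) {k : ℕ} {x : P}
    (hx : x ∈ itComm S ⊤ k) {l : List P} (hkl : k + l.length = c + 1) :
    (↑(leftNormedComm x l) : P ⧸ N) = 1 :=
  (QuotientGroup.eq_one_iff _).2 (h1 (hkl ▸ leftNormedComm_mem_itComm hx l))

theorem leftNormedComm_conj_of_mul [S.Normal] (h1 : itComm S ⊤ (c + 1) ≤ N) {k : ℕ}
    {l : List P} (hkl : k + l.length = c)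
    (hmul : ∀ x ∈ itComm S ⊤ k, ∀ y ∈ itComm S ⊤ k,
      (↑(leftNormedComm (x * y) l) : P ⧸ N) = leftNormedComm x l * leftNormedComm y l)
    {x : P} (hx : x ∈ itComm S ⊤ k) (a : P) :
    (↑(leftNormedComm (a * x * a⁻¹) l) : P ⧸ N) = leftNormedComm x l := by
  have hax : ⁅a, x⁆ ∈ itComm S ⊤ (k + 1) := by
    rw [itComm_succ, commutator_comm]
    exact commutator_mem_commutator (mem_top a) hx
  rw [show a * x * a⁻¹ = ⁅a, x⁆ * x by group, hmul _ (commutator_le_left _ _ hax) _ hx,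
    leftNormedComm_eq_one_of_mem h1 hax (by omega), one_mul]

theorem leftNormedComm_mul [S.Normal] (h1 : itComm S ⊤ (c + 1) ≤ N) :
    ∀ {k : ℕ} {l : List P}, k + l.length = c → ∀ x ∈ itComm S ⊤ k, ∀ y ∈ itComm S ⊤ k,
      (↑(leftNormedComm (x * y) l) : P ⧸ N) = leftNormedComm x l * leftNormedComm y l
  | _, [], _, x, _, y, _ => QuotientGroup.mk_mul N x y
  | k, f :: l, hkl, x, hx, y, hy => by
      have hkl' : k + 1 + l.length = c := by simp only [List.length_cons] at hkl; omega
      have ih := leftNormedComm_mul h1 hkl'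
      have hxf : ⁅x, f⁆ ∈ itComm S ⊤ (k + 1) := commutator_mem_commutator hx (mem_top f)
      have hyf : ⁅y, f⁆ ∈ itComm S ⊤ (k + 1) := commutator_mem_commutator hy (mem_top f)
      rw [leftNormedComm_cons, show ⁅x * y, f⁆ = x * ⁅y, f⁆ * x⁻¹ * ⁅x, f⁆ by group,
        ih _ ((itComm_normal S ⊤ (k + 1)).conj_mem _ hyf x) _ hxf,
        leftNormedComm_conj_of_mul h1 hkl' ih hyf x]
      exact (commute_of_mem_itComm h1 (hkl' ▸ leftNormedComm_mem_itComm hyf l) _).eq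

theorem leftNormedComm_conj [S.Normal] (h1 : itComm S ⊤ (c + 1) ≤ N) {k : ℕ} {l : List P}
    (hkl : k + l.length = c) {x : P} (hx : x ∈ itComm S ⊤ k) (a : P) :
    (↑(leftNormedComm (a * x * a⁻¹) l) : P ⧸ N) = leftNormedComm x l :=
  leftNormedComm_conj_of_mul h1 hkl (leftNormedComm_mul h1 hkl) hx a

theorem leftNormedComm_inv [S.Normal] (h1 : itComm S ⊤ (c + 1) ≤ N) {k : ℕ} {l : List P}
    (hkl : k + l.length = c) {x : P} (hx : x ∈ itComm S ⊤ k) :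
    (↑(leftNormedComm x⁻¹ l) : P ⧸ N) = (↑(leftNormedComm x l) : P ⧸ N)⁻¹ := by
  refine eq_inv_of_mul_eq_one_left ?_
  rw [← leftNormedComm_mul h1 hkl _ (inv_mem hx) _ hx, inv_mul_cancel, leftNormedComm_one,
    QuotientGroup.mk_one]

theorem leftNormedComm_cons_mul [S.Normal] (h1 : itComm S ⊤ (c + 1) ≤ N) {k : ℕ}
    {l : List P} (hkl : k + 1 + l.length = c) {u : P} (hu : u ∈ itComm S ⊤ k) (f g : P) :
    (↑(leftNormedComm u (f * g :: l)) : P ⧸ N) =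
      leftNormedComm u (f :: l) * leftNormedComm u (g :: l) := by
  have huf : ⁅u, f⁆ ∈ itComm S ⊤ (k + 1) := commutator_mem_commutator hu (mem_top f)
  have hug : ⁅u, g⁆ ∈ itComm S ⊤ (k + 1) := commutator_mem_commutator hu (mem_top g)
  simp only [leftNormedComm_cons]
  rw [show ⁅u, f * g⁆ = ⁅u, f⁆ * (f * ⁅u, g⁆ * f⁻¹) by group,
    leftNormedComm_mul h1 hkl _ huf _ ((itComm_normal S ⊤ (k + 1)).conj_mem _ hug f),
    leftNormedComm_conj h1 hkl hug f]

theorem leftNormedComm_cons_eq_one_of_mem {k : ℕ} {l : List P}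
    (hγ : itComm ⁅itComm S ⊤ k, S⁆ ⊤ l.length ≤ N) {u t : P} (hu : u ∈ itComm S ⊤ k)
    (ht : t ∈ S) : (↑(leftNormedComm u (t :: l)) : P ⧸ N) = 1 :=
  (QuotientGroup.eq_one_iff _).2 (hγ (by
    simpa using leftNormedComm_mem_itComm (k := 0) (commutator_mem_commutator hu ht) l))

theorem leftNormedComm_cons_congr [S.Normal] (h1 : itComm S ⊤ (c + 1) ≤ N) {k : ℕ}
    {l : List P} (hγ : itComm ⁅itComm S ⊤ k, S⁆ ⊤ l.length ≤ N) (hkl : k + 1 + l.length = c)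
    {u f f' : P} (hu : u ∈ itComm S ⊤ k) (hff' : f⁻¹ * f' ∈ S) :
    (↑(leftNormedComm u (f' :: l)) : P ⧸ N) = leftNormedComm u (f :: l) := by
  rw [show f' = f * (f⁻¹ * f') by group, leftNormedComm_cons_mul h1 hkl hu,
    leftNormedComm_cons_eq_one_of_mem hγ hu hff', mul_one]

theorem leftNormedComm_congr [S.Normal] (h1 : itComm S ⊤ (c + 1) ≤ N)
    (hγ : ∀ a b, a + 1 + b = c → itComm ⁅itComm S ⊤ a, S⁆ ⊤ b ≤ N) {l l' : List P}
    (hll' : List.Forall₂ (fun f f' => f⁻¹ * f' ∈ S) l l') {k : ℕ} (hkl : k + l.length = c)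
    {u : P} (hu : u ∈ itComm S ⊤ k) :
    (↑(leftNormedComm u l') : P ⧸ N) = leftNormedComm u l := by
  induction hll' generalizing k u with
  | nil => rfl
  | @cons f f' l l' hff' hll' ih =>
      have hkl' : k + 1 + l'.length = c := by
        rw [← hll'.length_eq]; simp only [List.length_cons] at hkl; omega
      rw [leftNormedComm_cons_congr h1 (hγ _ _ hkl') hkl' hu hff', leftNormedComm_cons]
      exact ih (k := k + 1) (by rw [hll'.length_eq]; omega)
        (commutator_mem_commutator hu (mem_top f))

theorem leftNormedComm_mul_right_of_mem [S.Normal] {R : Subgroup P} (hRS : R ≤ S)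
    (hR : itComm R ⊤ c ≤ N) (h1 : itComm S ⊤ (c + 1) ≤ N) {l : List P} (hl : l.length = c)
    {x r : P} (hx : x ∈ S) (hr : r ∈ R) :
    (↑(leftNormedComm (x * r) l) : P ⧸ N) = leftNormedComm x l := by
  have hrl : leftNormedComm r l ∈ itComm R ⊤ c := by
    simpa [hl] using leftNormedComm_mem_itComm (k := 0) hr l
  rw [leftNormedComm_mul h1 (k := 0) (by omega) x hx r (hRS hr),
    (QuotientGroup.eq_one_iff _).2 (hR hrl), mul_one]

theorem leftNormedComm_mem_of_forall_mem [S.Normal] (h1 : itComm S ⊤ (c + 1) ≤ N)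
    {M : Subgroup (P ⧸ N)}
    (hM : ∀ s ∈ S, ∀ l : List P, l.length = c → (↑(leftNormedComm s l) : P ⧸ N) ∈ M) :
    ∀ k {z : P}, z ∈ itComm S ⊤ k → ∀ {l : List P}, k + l.length = c →
      (↑(leftNormedComm z l) : P ⧸ N) ∈ M
  | 0, _, hz, l, hkl => hM _ hz l (by omega)
  | k + 1, z, hz, l, hkl => by
      rw [itComm_succ, Subgroup.commutator_def] at hz
      induction hz using closure_induction generalizing l with
      | mem _ hx =>
          obtain ⟨x, hx, f, -, rfl⟩ := hx
          exact leftNormedComm_mem_of_forall_mem h1 hM k hx (l := f :: l) (by simp; omega)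
      | one => simp
      | mul x y hx hy ihx ihy =>
          rw [← Subgroup.commutator_def, ← itComm_succ] at hx hy
          rw [leftNormedComm_mul h1 hkl x hx y hy]
          exact mul_mem (ihx l hkl) (ihy l hkl)
      | inv x hx ih =>
          rw [← Subgroup.commutator_def, ← itComm_succ] at hx
          rw [leftNormedComm_inv h1 hkl hx]
          exact inv_mem (ih l hkl)

end ModuloNormal

section Tensor

noncomputable def AbOf.liftOfAdd {A : Type} [Group A] {X : Type*} [AddCommGroup X] (f : A → X)
    (hf : ∀ a a', f (a * a') = f a + f a') : AbOf A →+ X :=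
  (Abelianization.lift (MonoidHom.mk' (fun a => Multiplicative.ofAdd (f a))
    (fun a a' => by rw [hf]; rfl))).toAdditiveLeft

@[simp]
theorem AbOf.liftOfAdd_of {A : Type} [Group A] {X : Type*} [AddCommGroup X] (f : A → X)
    (hf : ∀ a a', f (a * a') = f a + f a') (a : A) :
    AbOf.liftOfAdd f hf (Additive.ofMul (Abelianization.of a)) = f a := rfl

theorem AbOf.addHom_ext {A : Type} [Group A] {X : Type*} [AddCommGroup X] {φ ψ : AbOf A →+ X}
    (h : ∀ a : A,
      φ (Additive.ofMul (Abelianization.of a)) = ψ (Additive.ofMul (Abelianization.of a))) :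
    φ = ψ :=
  AddMonoidHom.ext fun x =>
    QuotientGroup.induction_on (C := fun y => φ (Additive.ofMul y) = ψ (Additive.ofMul y))
      (Additive.toMul x) h

theorem exists_tensorPair_hom_mem_range (A C : Type) [Group A] [Group C] :
    ∀ (c : ℕ) {X : Type*} [AddCommGroup X] (w : A → List C → X),
      (∀ a a' v, v.length = c → w (a * a') v = w a v + w a' v) →
      (∀ a g g' v₁ v₂, v₁.length + 1 + v₂.length = c →
        w a (v₁ ++ g * g' :: v₂) = w a (v₁ ++ g :: v₂) + w a (v₁ ++ g' :: v₂)) →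
      ∃ L : tensorPair A C c →+ X, ∀ a v, v.length = c → w a v ∈ L.range
  | 0, X, _, w, hhead, _ => by
      refine ⟨AbOf.liftOfAdd (fun a => w a []) (fun a a' => hhead a a' [] rfl), ?_⟩
      rintro a v hv
      rw [List.length_eq_zero_iff.mp hv]
      exact ⟨Additive.ofMul (Abelianization.of a), rfl⟩
  | c + 1, X, _, w, hhead, hslot => by
      let w' : A → List C → (AbOf C →+ X) := fun a v =>
        if h : v.length = c then
          AbOf.liftOfAdd (fun g => w a (v ++ [g])) (fun g g' => hslot a g g' v [] (by simp [h]))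
        else 0
      have hw' : ∀ a v, v.length = c → ∀ g : C,
          w' a v (Additive.ofMul (Abelianization.of g)) = w a (v ++ [g]) := by
        intro a v hv g
        simp only [w', dif_pos hv, AbOf.liftOfAdd_of]
      obtain ⟨L', hL'⟩ := exists_tensorPair_hom_mem_range A C c w'
        (fun a a' v hv => AbOf.addHom_ext fun g => by
          rw [AddMonoidHom.add_apply, hw' _ _ hv, hw' _ _ hv, hw' _ _ hv]
          exact hhead a a' _ (by simp [hv]))
        (fun a g g' v₁ v₂ hv => AbOf.addHom_ext fun h => by
          rw [AddMonoidHom.add_apply, hw' _ _ (by simp; omega), hw' _ _ (by simp; omega),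
            hw' _ _ (by simp; omega)]
          simpa using hslot a g g' v₁ (v₂ ++ [h]) (by simp; omega))
      refine ⟨TensorProduct.liftAddHom L' fun z t x => ?_, fun a v hv => ?_⟩
      · -- the `ℤ`-actions here are the `ModuleCat` ones, which are only propositionally `zsmul`
        refine (congrArg (L' · x) (int_smul_eq_zsmul (tensorPair A C c).isModule z t)).trans ?_
        refine .trans ?_
          (congrArg (L' t) (int_smul_eq_zsmul (ModuleCat.of ℤ (AbOf C)).isModule z x))
        exact (congrArg (· x) (map_zsmul L' z t)).trans (map_zsmul (L' t) z x).symm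
      obtain ⟨u, g, rfl⟩ := (List.eq_nil_or_concat v).resolve_left (by rintro rfl; simp at hv)
      have hu : u.length = c := by simpa using hv
      obtain ⟨t, ht⟩ := hL' a u hu
      exact ⟨t ⊗ₜ Additive.ofMul (Abelianization.of g), by
        change L' t (Additive.ofMul (Abelianization.of g)) = _
        rw [ht, hw' _ _ hu, List.concat_eq_append]⟩

end Tensor

section Quotient

variable {P : Type*} [Group P]

theorem mul_comm_of_commutator_le {H N : Subgroup P} [N.Normal] (h : ⁅H, H⁆ ≤ N)
    (a b : H ⧸ N.subgroupOf H) : a * b = b * a := by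
  induction a using QuotientGroup.induction_on with | H x => ?_
  induction b using QuotientGroup.induction_on with | H y => ?_
  rw [← QuotientGroup.mk_mul, ← QuotientGroup.mk_mul, QuotientGroup.eq, mem_subgroupOf]
  simpa [commutatorElement_def, mul_assoc] using
    h (commutator_mem_commutator (inv_mem y.2) (inv_mem x.2))

theorem injective_map_subgroupOf_subtype (H N : Subgroup P) [N.Normal] :
    Function.Injective (QuotientGroup.map (N.subgroupOf H) N H.subtype le_rfl) := by
  rw [injective_iff_map_eq_one]
  intro q hq
  induction q using QuotientGroup.induction_on with | H x => ?_
  exact (QuotientGroup.eq_one_iff x).2 (mem_subgroupOf.2 ((QuotientGroup.eq_one_iff _).1 hq))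

end Quotient

section Presentation

variable {F G : Type} [Group F] [Group G] {π : F →* G} {B : Subgroup G}
  {N : Subgroup F} [N.Normal] {c : ℕ}

theorem inv_mul_mem_comap_of_coe_eq {f f' : F} (h : (π f : G ⧸ B) = π f') :
    f⁻¹ * f' ∈ B.comap π := by
  rw [mem_comap, map_mul, map_inv]
  exact QuotientGroup.eq.1 h

theorem leftNormedComm_section_mul [B.Normal] (hR : itComm π.ker ⊤ c ≤ N)
    (h1 : itComm (B.comap π) ⊤ (c + 1) ≤ N) {sB : B → F} (hsB : ∀ b, π (sB b) = b) (b b' : B)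
    {l : List F} (hl : l.length = c) :
    (↑(leftNormedComm (sB (b * b')) l) : F ⧸ N) =
      leftNormedComm (sB b) l * leftNormedComm (sB b') l := by
  have hS : ∀ b, sB b ∈ B.comap π := fun b => by simp [hsB]
  rw [show sB (b * b') = sB b * sB b' * ((sB b * sB b')⁻¹ * sB (b * b')) by group,
    leftNormedComm_mul_right_of_mem (π.ker_le_comap B) hR h1 hl (mul_mem (hS b) (hS b'))
      (by simp [hsB]),
    leftNormedComm_mul h1 (k := 0) (by omega) _ (hS b) _ (hS b')]

theorem leftNormedComm_section_cons_mul [B.Normal] (h1 : itComm (B.comap π) ⊤ (c + 1) ≤ N)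
    (hγ : ∀ a b, a + 1 + b = c → itComm ⁅itComm (B.comap π) ⊤ a, B.comap π⁆ ⊤ b ≤ N)
    {sG : G ⧸ B → F} (hsG : ∀ g, (π (sG g) : G ⧸ B) = g) {k : ℕ} {u : F}
    (hu : u ∈ itComm (B.comap π) ⊤ k) (g g' : G ⧸ B) {l : List (G ⧸ B)}
    (hkl : k + 1 + l.length = c) :
    (↑(leftNormedComm u ((g * g' :: l).map sG)) : F ⧸ N) =
      leftNormedComm u ((g :: l).map sG) * leftNormedComm u ((g' :: l).map sG) := by
  rw [← List.length_map sG] at hkl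
  rw [List.map_cons, leftNormedComm_cons_congr h1 (hγ _ _ hkl) hkl hu (f := sG g * sG g')
      (inv_mul_mem_comap_of_coe_eq (by rw [map_mul, QuotientGroup.mk_mul, hsG, hsG, hsG])),
    leftNormedComm_cons_mul h1 hkl hu]
  rfl

theorem leftNormedComm_eq_section [B.Normal] (hR : itComm π.ker ⊤ c ≤ N)
    (h1 : itComm (B.comap π) ⊤ (c + 1) ≤ N)
    (hγ : ∀ a b, a + 1 + b = c → itComm ⁅itComm (B.comap π) ⊤ a, B.comap π⁆ ⊤ b ≤ N)
    {sB : B → F} (hsB : ∀ b, π (sB b) = b) {sG : G ⧸ B → F} (hsG : ∀ g, (π (sG g) : G ⧸ B) = g)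
    {s : F} (hs : π s ∈ B) {l : List F} (hl : l.length = c) :
    (↑(leftNormedComm s l) : F ⧸ N) =
      leftNormedComm (sB ⟨π s, hs⟩) ((l.map fun f => (π f : G ⧸ B)).map sG) := by
  have hll' : List.Forall₂ (fun f f' => f⁻¹ * f' ∈ B.comap π) l
      ((l.map fun f => (π f : G ⧸ B)).map sG) := by
    rw [List.map_map, List.forall₂_map_right_iff, List.forall₂_same]
    exact fun f _ => inv_mul_mem_comap_of_coe_eq (hsG _).symm
  rw [leftNormedComm_congr h1 hγ hll' (k := 0) (by omega)
      (show sB ⟨π s, hs⟩ ∈ B.comap π by simpa [hsB] using hs),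
    show sB ⟨π s, hs⟩ = s * (s⁻¹ * sB ⟨π s, hs⟩) by group,
    leftNormedComm_mul_right_of_mem (π.ker_le_comap B) hR h1 hl hs (by simp [hsB])]

theorem exists_tensorPair_hom_leftNormedComm [B.Normal] (hR : itComm π.ker ⊤ c ≤ N)
    (h1 : itComm (B.comap π) ⊤ (c + 1) ≤ N)
    (hγ : ∀ a b, a + 1 + b = c → itComm ⁅itComm (B.comap π) ⊤ a, B.comap π⁆ ⊤ b ≤ N)
    {sB : B → F} (hsB : ∀ b, π (sB b) = b) {sG : G ⧸ B → F} (hsG : ∀ g, (π (sG g) : G ⧸ B) = g) :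
    ∃ L : tensorPair B (G ⧸ B) c →+ Additive ((itComm (B.comap π) ⊤ c : Subgroup F) ⧸
        N.subgroupOf (itComm (B.comap π) ⊤ c)),
      ∀ b (v : List (G ⧸ B)), v.length = c → ∃ t,
        QuotientGroup.map (N.subgroupOf (itComm (B.comap π) ⊤ c)) N
          (itComm (B.comap π) ⊤ c).subtype le_rfl (L t).toMul =
            leftNormedComm (sB b) (v.map sG) := by
  set H := itComm (B.comap π) ⊤ c
  let _ : CommGroup (H ⧸ N.subgroupOf H) :=
    { mul_comm := mul_comm_of_commutator_le (h1.trans' (commutator_mono le_rfl le_top)) }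
  have hsB_mem : ∀ b (l : List F), leftNormedComm (sB b) l ∈ itComm (B.comap π) ⊤ l.length :=
    fun b l => by
      have := leftNormedComm_mem_itComm (k := 0) (show sB b ∈ B.comap π by simp [hsB]) l
      rwa [zero_add] at this
  have hmem : ∀ b (v : List (G ⧸ B)), v.length = c → leftNormedComm (sB b) (v.map sG) ∈ H :=
    fun b v hv => by simpa [hv] using hsB_mem b (v.map sG)
  set j := QuotientGroup.map (N.subgroupOf H) N H.subtype le_rfl
  -- `exists_tensorPair_hom_mem_range` only looks at lists of length `c`
  let w : B → List (G ⧸ B) → Additive (H ⧸ N.subgroupOf H) := fun b v =>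
    if hv : v.length = c then .ofMul ↑(⟨_, hmem b v hv⟩ : H) else 0
  have hjw : ∀ b v, v.length = c → j (w b v).toMul = leftNormedComm (sB b) (v.map sG) :=
    fun b v hv => by simp only [w, dif_pos hv]; rfl
  have hw_add : ∀ {x y z : Additive (H ⧸ N.subgroupOf H)},
      j x.toMul = j y.toMul * j z.toMul → x = y + z := fun h =>
    Additive.toMul.injective (injective_map_subgroupOf_subtype H N (by rw [toMul_add, map_mul, h]))
  obtain ⟨L, hL⟩ := exists_tensorPair_hom_mem_range B (G ⧸ B) c w
    (fun b b' v hv => hw_add (by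
      rw [hjw _ _ hv, hjw _ _ hv, hjw _ _ hv]
      exact leftNormedComm_section_mul hR h1 hsB b b' (by simpa using hv)))
    (fun b g g' v₁ v₂ hv => hw_add (by
      rw [hjw b (v₁ ++ g * g' :: v₂) (by simp; omega), hjw b (v₁ ++ g :: v₂) (by simp; omega),
        hjw b (v₁ ++ g' :: v₂) (by simp; omega)]
      simp only [List.map_append, leftNormedComm_append]
      exact leftNormedComm_section_cons_mul h1 hγ hsG (hsB_mem b _) g g' (by simp; omega)))
  refine ⟨L, fun b v hv => ?_⟩
  obtain ⟨t, ht⟩ := hL b v hv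
  exact ⟨t, by rw [ht, hjw b v hv]⟩

theorem exists_surjective_tensorPair_quotient [B.Normal] (hπ : Function.Surjective π)
    (hR : itComm π.ker ⊤ c ≤ N) (h1 : itComm (B.comap π) ⊤ (c + 1) ≤ N)
    (hγ : ∀ a b, a + 1 + b = c → itComm ⁅itComm (B.comap π) ⊤ a, B.comap π⁆ ⊤ b ≤ N) :
    ∃ θ : tensorPair B (G ⧸ B) c →+ Additive ((itComm (B.comap π) ⊤ c : Subgroup F) ⧸
        N.subgroupOf (itComm (B.comap π) ⊤ c)),
      Function.Surjective θ := by
  set H := itComm (B.comap π) ⊤ c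
  obtain ⟨sB, hsB⟩ : ∃ sB : B → F, ∀ b, π (sB b) = b := ⟨_, fun b => Function.surjInv_eq hπ b⟩
  obtain ⟨sG, hsG⟩ : ∃ sG : G ⧸ B → F, ∀ g, (π (sG g) : G ⧸ B) = g :=
    ⟨_, Function.surjInv_eq ((QuotientGroup.mk_surjective).comp hπ)⟩
  obtain ⟨L, hL⟩ := exists_tensorPair_hom_leftNormedComm hR h1 hγ hsB hsG
  set j := QuotientGroup.map (N.subgroupOf H) N H.subtype le_rfl
  let M : Subgroup (F ⧸ N) := L.range.toSubgroup'.map j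
  have hM : ∀ z ∈ H, (z : F ⧸ N) ∈ M := fun z hz =>
    leftNormedComm_mem_of_forall_mem h1 (fun s hs l hl => by
      obtain ⟨t, ht⟩ := hL ⟨π s, hs⟩ (l.map fun f => (π f : G ⧸ B)) (by simpa using hl)
      rw [leftNormedComm_eq_section hR h1 hγ hsB hsG hs hl, ← ht]
      exact mem_map_of_mem j ⟨t, rfl⟩) c hz (l := []) rfl
  refine ⟨L, fun q => ?_⟩
  obtain ⟨⟨z, hz⟩, hq⟩ := QuotientGroup.mk_surjective q.toMul
  have hq' : q.toMul ∈ L.range.toSubgroup' :=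
    hq ▸ (mem_map_iff_mem (injective_map_subgroupOf_subtype H N)).1 (hM z hz)
  exact AddMonoidHom.mem_range.1 hq'

end Presentation

theorem exists_epi_tensor_onto_commutator_quotient_general {G : Type} [Group G]
    {F : Type} [Group F] (π : F →* G) (hπ : Function.Surjective π)
    (B : Subgroup G) [B.Normal] (c : ℕ) :
    (∀ a b : (itComm (B.comap π) ⊤ c : Subgroup F) ⧸
        (itComm π.ker ⊤ c ⊔ itComm (B.comap π) ⊤ (c+1) ⊔
          (Finset.Icc 2 (c+1)).sup (gammaMixed (B.comap π) c)).subgroupOf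
            (itComm (B.comap π) ⊤ c),
      a * b = b * a) ∧
    ∃ θ : tensorPair B (G ⧸ B) c →+
        Additive ((itComm (B.comap π) ⊤ c : Subgroup F) ⧸
          (itComm π.ker ⊤ c ⊔ itComm (B.comap π) ⊤ (c+1) ⊔
            (Finset.Icc 2 (c+1)).sup (gammaMixed (B.comap π) c)).subgroupOf
              (itComm (B.comap π) ⊤ c)),
      Function.Surjective θ := by
  set S := B.comap π
  set N := itComm π.ker ⊤ c ⊔ itComm S ⊤ (c + 1) ⊔ (Finset.Icc 2 (c + 1)).sup (gammaMixed S c)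
  have hR : itComm π.ker ⊤ c ≤ N := le_sup_left.trans le_sup_left
  have h1 : itComm S ⊤ (c + 1) ≤ N := le_sup_right.trans le_sup_left
  have hγ : ∀ a b, a + 1 + b = c → itComm ⁅itComm S ⊤ a, S⁆ ⊤ b ≤ N := by
    rintro a b rfl
    rw [← gammaMixed_eq_itComm]
    exact (Finset.le_sup (f := gammaMixed S _) (Finset.mem_Icc.2 ⟨by omega, by omega⟩)).trans
      le_sup_right
  exact ⟨mul_comm_of_commutator_le (h1.trans' (commutator_mono le_rfl le_top)),
    exists_surjective_tensorPair_quotient hπ hR h1 hγ⟩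

/-- Let `G` be a group with free presentation `F/R` (`π : F ↠ G`, `R = ker π`), `B` a normal
subgroup of `G` and `S = π⁻¹(B)`.  Then for every `c ≥ 1` the quotient
`[S,_c F] / ([R,_c F]·[S,_{c+1} F]·∏_{i=2}^{c+1} γ_{c+1}(S,F)_i)` is abelian and there is a
surjective homomorphism onto it from `⊗^{c+1}(B, G/B)`. -/
theorem exists_epi_tensor_onto_commutator_quotient {G : Type} [Group G]
    {F : Type} [Group F] [IsFreeGroup F] (π : F →* G) (hπ : Function.Surjective π)
    (B : Subgroup G) [B.Normal] (c : ℕ) (hc : 1 ≤ c) :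
    (∀ a b : (itComm (B.comap π) ⊤ c : Subgroup F) ⧸
        (itComm π.ker ⊤ c ⊔ itComm (B.comap π) ⊤ (c+1) ⊔
          (Finset.Icc 2 (c+1)).sup (gammaMixed (B.comap π) c)).subgroupOf
            (itComm (B.comap π) ⊤ c),
      a * b = b * a) ∧
    ∃ θ : tensorPair B (G ⧸ B) c →+
        Additive ((itComm (B.comap π) ⊤ c : Subgroup F) ⧸
          (itComm π.ker ⊤ c ⊔ itComm (B.comap π) ⊤ (c+1) ⊔
            (Finset.Icc 2 (c+1)).sup (gammaMixed (B.comap π) c)).subgroupOf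
              (itComm (B.comap π) ⊤ c)),
      Function.Surjective θ :=
  exists_epi_tensor_onto_commutator_quotient_general π hπ B c
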